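/- The one-dimensional subalgebras of A4 are exactly the subspaces ⟨e1⟩, ⟨e2⟩, ⟨e1 − e2⟩, ⟨e1 + e2 + i·e3⟩, ⟨e1 + e2 − i·e3⟩, ⟨e1 − e2 + i·e3⟩, and ⟨e1 − e2 − i·e3⟩, where i is the imaginary unit. -/
import Mathlib


set_option linter.unreachableTactic false
set_option linter.unnecessarySeqFocus false
set_option linter.unusedTactic false

noncomputable section

/-- The underlying space of our 3-dimensional algebras. -/
abbrev V3 : Type := Fin 3 → ℂ
/-- Multiplication of `A4`: unit `e1`, with `e2 * e2 = e2`, `e3 * e3 = -e1 + e2`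
and `e2 * e3 = e3 * e2 = 0`. -/
def A4mul : V3 →ₗ[ℂ] V3 →ₗ[ℂ] V3 :=
  LinearMap.mk₂ ℂ
    (fun x y => ![x 0 * y 0 - x 2 * y 2,
                  x 0 * y 1 + x 1 * y 0 + x 1 * y 1 + x 2 * y 2,
                  x 0 * y 2 + x 2 * y 0])
    (fun x x' y => by funext k; fin_cases k <;> simp <;> ring)
    (fun a x y => by funext k; fin_cases k <;> simp <;> ring)
    (fun x y y' => by funext k; fin_cases k <;> simp <;> ring)
    (fun a x y => by funext k; fin_cases k <;> simp <;> ring)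
/-- The basis vector `e1` (the unit). -/
def e1 : V3 := ![1, 0, 0]
/-- The basis vector `e2`. -/
def e2 : V3 := ![0, 1, 0]
/-- The basis vector `e3`. -/
def e3 : V3 := ![0, 0, 1]

lemma A4mul_apply' (x y : V3) : A4mul x y = ![x 0 * y 0 - x 2 * y 2,
                  x 0 * y 1 + x 1 * y 0 + x 1 * y 1 + x 2 * y 2,
                  x 0 * y 2 + x 2 * y 0] := rfl

lemma closure_of_idem' (g : V3) (hg : g ≠ 0) (lam : ℂ) (h : A4mul g g = lam • g) :
    (∀ x ∈ Submodule.span ℂ {g}, ∀ y ∈ Submodule.span ℂ {g},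
      A4mul x y ∈ Submodule.span ℂ {g}) ∧
      Module.finrank ℂ (Submodule.span ℂ ({g} : Set V3)) = 1 := by
  constructor
  · intro x hx y hy
    rw [Submodule.mem_span_singleton] at hx hy ⊢
    obtain ⟨s, rfl⟩ := hx
    obtain ⟨t, rfl⟩ := hy
    exact ⟨s * t * lam, by simp [h, smul_smul]; ring_nf⟩
  · exact finrank_span_singleton hg

lemma span_eq_of_smul' (v g : V3) (s : ℂ) (hs : s ≠ 0) (h : v = s • g) :
    Submodule.span ℂ ({v} : Set V3) = Submodule.span ℂ {g} := by
  rw [h]; exact Submodule.span_singleton_smul_eq (isUnit_iff_ne_zero.mpr hs) g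

/-- **Theorem.** The one-dimensional subalgebras of `A4` are exactly `⟨e1⟩`,
`⟨e2⟩`, `⟨e1 − e2⟩`, `⟨e1 + e2 ± i e3⟩` and `⟨e1 − e2 ± i e3⟩`. -/
theorem one_dim_subalgebras_of_A4 (W : Submodule ℂ V3) :
    ((∀ x ∈ W, ∀ y ∈ W, A4mul x y ∈ W) ∧ Module.finrank ℂ W = 1) ↔
      (W = Submodule.span ℂ {e1} ∨ W = Submodule.span ℂ {e2} ∨
        W = Submodule.span ℂ {e1 - e2} ∨
        W = Submodule.span ℂ {e1 + e2 + Complex.I • e3} ∨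
        W = Submodule.span ℂ {e1 + e2 - Complex.I • e3} ∨
        W = Submodule.span ℂ {e1 - e2 + Complex.I • e3} ∨
        W = Submodule.span ℂ {e1 - e2 - Complex.I • e3}) := by
  constructor
  · rintro ⟨hmul, hfin⟩
    have hrk : Module.rank ℂ W = 1 := by
      rw [Module.rank_eq_one_iff_finrank_eq_one]; exact hfin
    obtain ⟨v, hvW, hv0, hle⟩ := (rank_submodule_eq_one_iff W).mp hrk
    have hW : W = Submodule.span ℂ {v} :=
      le_antisymm hle (Submodule.span_le.mpr (by simp [hvW]))
    have hvv : A4mul v v ∈ W := hmul v hvW v hvW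
    rw [hW, Submodule.mem_span_singleton] at hvv
    obtain ⟨lam, hlam⟩ := hvv
    set a := v 0 with ha'
    set b := v 1 with hb'
    set c := v 2 with hc'
    have h0 : lam * a = a * a - c * c := by
      have := congrFun hlam 0; simpa [A4mul_apply'] using this
    have h1 : lam * b = a * b + b * a + b * b + c * c := by
      have := congrFun hlam 1; simpa [A4mul_apply'] using this
    have h2 : lam * c = a * c + c * a := by
      have := congrFun hlam 2; simpa [A4mul_apply'] using this
    have hvne : ¬(a = 0 ∧ b = 0 ∧ c = 0) := by
      rintro ⟨h₁, h₂, h₃⟩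
      apply hv0
      funext k; fin_cases k <;> assumption
    by_cases hc : c = 0
    · -- c = 0
      by_cases hA : a = 0
      · -- a = 0, so b ≠ 0 : span e2
        have hb : b ≠ 0 := fun h => hvne ⟨hA, h, hc⟩
        right; left
        rw [hW]
        exact span_eq_of_smul' v e2 b hb (by
          funext k; fin_cases k <;> simp [e2, ← ha', ← hb', ← hc', hA, hc])
      · -- a ≠ 0 : lam = a, b(a+b)=0
        have hlam_a : lam = a := by
          have : a * (lam - a) = 0 := by rw [hc] at h0; linear_combination h0
          rcases mul_eq_zero.mp this with h | h
          · exact absurd h hA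
          · linear_combination h
        have hbb : b * (a + b) = 0 := by
          rw [hc, hlam_a] at h1; linear_combination -h1
        rcases mul_eq_zero.mp hbb with hb | hb
        · left
          rw [hW]
          exact span_eq_of_smul' v e1 a hA (by
            funext k; fin_cases k <;> simp [e1, ← ha', ← hb', ← hc', hb, hc])
        · right; right; left
          have hbval : b = -a := by linear_combination hb
          rw [hW]
          exact span_eq_of_smul' v (e1 - e2) a hA (by
            funext k; fin_cases k <;>
              simp [e1, e2, ← ha', ← hb', ← hc', hbval, hc])
    · -- c ≠ 0 : lam = 2a
      have hlam2a : lam = 2 * a := by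
        have : c * (lam - 2 * a) = 0 := by linear_combination h2
        rcases mul_eq_zero.mp this with h | h
        · exact absurd h hc
        · linear_combination h
      have hcc : c * c = -(a * a) := by
        rw [hlam2a] at h0; linear_combination h0
      have hA : a ≠ 0 := by
        intro h
        apply hc
        have : c * c = 0 := by rw [hcc, h]; ring
        exact mul_self_eq_zero.mp this
      have hbb : b * b = a * a := by
        rw [hlam2a] at h1; linear_combination -h1 - hcc
      have hcfac : (c - Complex.I * a) * (c + Complex.I * a) = 0 := by
        have hI : Complex.I * Complex.I = -1 := Complex.I_mul_I
        linear_combination hcc - a * a * hI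
      have hbfac : (b - a) * (b + a) = 0 := by linear_combination hbb
      rcases mul_eq_zero.mp hbfac with hb | hb <;>
        rcases mul_eq_zero.mp hcfac with hcv | hcv
      · -- b = a, c = I a
        right; right; right; left
        rw [hW]
        have hb2 : b = a := by linear_combination hb
        have hc2 : c = Complex.I * a := by linear_combination hcv
        exact span_eq_of_smul' v (e1 + e2 + Complex.I • e3) a hA (by
          funext k; fin_cases k <;>
            simp [e1, e2, e3, ← ha', ← hb', ← hc', hb2, hc2] <;> ring)
      · -- b = a, c = -I a
        right; right; right; right; left
        rw [hW]
        have hb2 : b = a := by linear_combination hb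
        have hc2 : c = -(Complex.I * a) := by linear_combination hcv
        exact span_eq_of_smul' v (e1 + e2 - Complex.I • e3) a hA (by
          funext k; fin_cases k <;>
            simp [e1, e2, e3, ← ha', ← hb', ← hc', hb2, hc2] <;> ring)
      · -- b = -a, c = I a
        right; right; right; right; right; left
        rw [hW]
        have hb2 : b = -a := by linear_combination hb
        have hc2 : c = Complex.I * a := by linear_combination hcv
        exact span_eq_of_smul' v (e1 - e2 + Complex.I • e3) a hA (by
          funext k; fin_cases k <;>
            simp [e1, e2, e3, ← ha', ← hb', ← hc', hb2, hc2] <;> ring)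
      · -- b = -a, c = -I a
        right; right; right; right; right; right
        rw [hW]
        have hb2 : b = -a := by linear_combination hb
        have hc2 : c = -(Complex.I * a) := by linear_combination hcv
        exact span_eq_of_smul' v (e1 - e2 - Complex.I • e3) a hA (by
          funext k; fin_cases k <;>
            simp [e1, e2, e3, ← ha', ← hb', ← hc', hb2, hc2] <;> ring)
  · intro h
    have ne0 : ∀ (g : V3), g 0 = 1 → g ≠ 0 := fun g hg1 hh => by
      rw [hh] at hg1; simpa using hg1
    rcases h with h | h | h | h | h | h | h <;> subst h
    · exact closure_of_idem' _ (ne0 _ (by simp [e1])) 1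
        (by funext k; fin_cases k <;> simp [A4mul_apply', e1])
    · refine closure_of_idem' _ ?_ 1
        (by funext k; fin_cases k <;> simp [A4mul_apply', e2])
      intro hh; have := congrFun hh 1; simp [e2] at this
    · exact closure_of_idem' _ (ne0 _ (by simp [e1, e2])) 1
        (by funext k; fin_cases k <;> simp [A4mul_apply', e1, e2] <;> ring)
    · exact closure_of_idem' _ (ne0 _ (by simp [e1, e2, e3])) 2
        (by funext k; fin_cases k <;> simp [A4mul_apply', e1, e2, e3] <;> ring_nf <;>
          simp [Complex.ext_iff])
    · exact closure_of_idem' _ (ne0 _ (by simp [e1, e2, e3])) 2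
        (by funext k; fin_cases k <;> simp [A4mul_apply', e1, e2, e3] <;> ring_nf <;>
          simp [Complex.ext_iff])
    · exact closure_of_idem' _ (ne0 _ (by simp [e1, e2, e3])) 2
        (by funext k; fin_cases k <;> simp [A4mul_apply', e1, e2, e3] <;> ring_nf <;>
          simp [Complex.ext_iff])
    · exact closure_of_idem' _ (ne0 _ (by simp [e1, e2, e3])) 2
        (by funext k; fin_cases k <;> simp [A4mul_apply', e1, e2, e3] <;> ring_nf <;>
          simp [Complex.ext_iff])
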